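/- Conditional Bayes density-ratio identity: Let (X, A) be a pair of random variables where A is discrete taking values a and a'. If P(A = a' | X) > 0 a.s. and P(A = a) > 0 and P(A = a') > 0, then the Radon-Nikodym derivative of the conditional law of X given A = a with respect to the conditional law of X given A = a' equals [P(A = a | X) / P(A = a' | X)] · [P(A = a') / P(A = a)], P(· | A = a')-almost surely. -/

import Mathlib

/-!
Writing `μ` for the law of `X`, the version `pₐ` of `P(A = a | X)` is, by the defining property
of conditional expectation on the sets `X⁻¹' T`, the `μ`-density of `T ↦ P(X ∈ T, A = a)`.
Hence the law of `X` given `A = a` has `μ`-density `pₐ / P(A = a)`, and likewise for `a'`.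
Since `pₐ' > 0` `μ`-a.e., the first density is the second one times the claimed ratio, which is
therefore the Radon–Nikodym derivative.
-/

open MeasureTheory ProbabilityTheory
open scoped ENNReal

namespace MeasureTheory

theorem Measure.rnDeriv_withDensity_of_ae_eq_mul {β : Type*} [MeasurableSpace β] {μ : Measure β}
    {f₁ f₂ g : β → ℝ≥0∞} (hf₂ : Measurable f₂) (hg : Measurable g)
    [SigmaFinite (μ.withDensity f₂)] (h : f₁ =ᵐ[μ] f₂ * g) :
    (μ.withDensity f₁).rnDeriv (μ.withDensity f₂) =ᵐ[μ.withDensity f₂] g := by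
  rw [withDensity_congr_ae h, withDensity_mul μ hf₂ hg]
  exact Measure.rnDeriv_withDensity _ hg

section ConditionalLaw

variable {Ω 𝒳 : Type*} {mΩ : MeasurableSpace Ω} [MeasurableSpace 𝒳] {P : Measure Ω}
  {X : Ω → 𝒳} {s : Set Ω} {p : 𝒳 → ℝ}

theorem ae_nonneg_of_eq_condExp_indicator
    (hver : (fun ω => p (X ω))
      =ᵐ[P] P[s.indicator (fun _ => (1 : ℝ)) | MeasurableSpace.comap X inferInstance]) :
    0 ≤ᵐ[P] fun ω => p (X ω) :=
  (condExp_nonneg (.of_forall (s.indicator_nonneg fun _ _ => zero_le_one))).trans_eq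
    hver.symm

variable [IsFiniteMeasure P]

theorem map_restrict_eq_withDensity_of_eq_condExp (hX : Measurable X) (hs : MeasurableSet s)
    (hp : Measurable p)
    (hver : (fun ω => p (X ω))
      =ᵐ[P] P[s.indicator (fun _ => (1 : ℝ)) | MeasurableSpace.comap X inferInstance]) :
    (P.restrict s).map X = (P.map X).withDensity fun x => ENNReal.ofReal (p x) := by
  have hm : MeasurableSpace.comap X inferInstance ≤ mΩ := hX.comap_le
  have hint : Integrable (fun ω => p (X ω)) P := integrable_condExp.congr hver.symm
  ext T hT
  have hXT : MeasurableSet[MeasurableSpace.comap X inferInstance] (X ⁻¹' T) := ⟨T, hT, rfl⟩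
  have hset : ∫ ω in X ⁻¹' T, p (X ω) ∂P
      = ∫ ω in X ⁻¹' T, s.indicator (fun _ => (1 : ℝ)) ω ∂P := by
    rw [integral_congr_ae (ae_restrict_of_ae hver)]
    exact setIntegral_condExp hm ((integrable_const 1).indicator hs) hXT
  rw [Measure.map_apply hX hT, Measure.restrict_apply (hX hT), withDensity_apply _ hT,
    setLIntegral_map hT hp.ennreal_ofReal hX,
    ← ofReal_integral_eq_lintegral_ofReal hint.integrableOn
      (ae_restrict_of_ae (ae_nonneg_of_eq_condExp_indicator hver)),
    hset, integral_indicator hs, setIntegral_const, smul_eq_mul, mul_one,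
    measureReal_restrict_apply hs, Set.inter_comm, ofReal_measureReal]

theorem map_cond_eq_withDensity_of_eq_condExp (hX : Measurable X) (hs : MeasurableSet s)
    (hp : Measurable p)
    (hver : (fun ω => p (X ω))
      =ᵐ[P] P[s.indicator (fun _ => (1 : ℝ)) | MeasurableSpace.comap X inferInstance]) :
    P[|s].map X = (P.map X).withDensity fun x => ENNReal.ofReal (p x / (P s).toReal) := by
  rcases eq_or_ne (P s) 0 with hPs | hPs
  · simp [cond_eq_zero_of_meas_eq_zero hPs, hPs]
  have hdensity : (fun x => ENNReal.ofReal (p x / (P s).toReal))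
      = (P s)⁻¹ • fun x => ENNReal.ofReal (p x) := by
    ext x
    rw [Pi.smul_apply, smul_eq_mul, ENNReal.ofReal_div_of_pos (ENNReal.toReal_pos hPs
      (measure_ne_top P s)), ENNReal.ofReal_toReal (measure_ne_top P s), div_eq_mul_inv, mul_comm]
  rw [ProbabilityTheory.cond, Measure.map_smul,
    map_restrict_eq_withDensity_of_eq_condExp hX hs hp hver, hdensity,
    withDensity_smul _ hp.ennreal_ofReal]

end ConditionalLaw

end MeasureTheory

theorem conditional_bayes_density_ratio_general
    {Ω 𝒳 α : Type*} {F : MeasurableSpace Ω} [MeasurableSpace 𝒳] [MeasurableSpace α]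
    [MeasurableSingletonClass α]
    (P : Measure Ω) [IsProbabilityMeasure P]
    (X : Ω → 𝒳) (hX : Measurable X)
    (A : Ω → α) (hA : Measurable A)
    (a a' : α)
    (ha' : 0 < P {ω | A ω = a'})
    (pa pa' : 𝒳 → ℝ) (hpa : Measurable pa) (hpa' : Measurable pa')
    (hpa_ver : (fun ω => pa (X ω))
      =ᵐ[P] P[Set.indicator {ω | A ω = a} (fun _ => (1:ℝ)) | MeasurableSpace.comap X inferInstance])
    (hpa'_ver : (fun ω => pa' (X ω))
      =ᵐ[P] P[Set.indicator {ω | A ω = a'} (fun _ => (1:ℝ)) | MeasurableSpace.comap X inferInstance])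
    (hpos : ∀ᵐ ω ∂P, 0 < pa' (X ω)) :
    (Measure.map X (P[|{ω | A ω = a}])).rnDeriv (Measure.map X (P[|{ω | A ω = a'}]))
      =ᵐ[Measure.map X (P[|{ω | A ω = a'}])]
      fun x => ENNReal.ofReal
        (pa x / pa' x * ((P {ω | A ω = a'}).toReal / (P {ω | A ω = a}).toReal)) := by
  have hPa' : (P {ω | A ω = a'}).toReal ≠ 0 :=
    ENNReal.toReal_ne_zero.2 ⟨ha'.ne', measure_ne_top _ _⟩
  have hpa_nonneg : ∀ᵐ x ∂P.map X, 0 ≤ pa x := (ae_map_iff hX.aemeasurable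
    (measurableSet_le measurable_const hpa)).2 (ae_nonneg_of_eq_condExp_indicator hpa_ver)
  have hpa'_pos : ∀ᵐ x ∂P.map X, 0 < pa' x :=
    (ae_map_iff hX.aemeasurable (measurableSet_lt measurable_const hpa')).2 hpos
  rw [map_cond_eq_withDensity_of_eq_condExp (s := {ω | A ω = a}) hX
      (hA (measurableSet_singleton a)) hpa hpa_ver,
    map_cond_eq_withDensity_of_eq_condExp (s := {ω | A ω = a'}) hX
      (hA (measurableSet_singleton a')) hpa' hpa'_ver]
  refine Measure.rnDeriv_withDensity_of_ae_eq_mul (hpa'.div_const _).ennreal_ofReal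
    ((hpa.div hpa').mul_const _).ennreal_ofReal ?_
  filter_upwards [hpa_nonneg, hpa'_pos] with x hx hx'
  rw [Pi.mul_apply, ← ENNReal.ofReal_mul (div_nonneg hx'.le ENNReal.toReal_nonneg)]
  congr 1
  field_simp

theorem conditional_bayes_density_ratio
    {Ω 𝒳 α : Type*} {F : MeasurableSpace Ω} [MeasurableSpace 𝒳] [MeasurableSpace α]
    [MeasurableSingletonClass α]
    (P : Measure Ω) [IsProbabilityMeasure P]
    (X : Ω → 𝒳) (hX : Measurable X)
    (A : Ω → α) (hA : Measurable A)
    (a a' : α) (hne : a ≠ a')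
    (ha : 0 < P {ω | A ω = a}) (ha' : 0 < P {ω | A ω = a'})
    (pa pa' : 𝒳 → ℝ) (hpa : Measurable pa) (hpa' : Measurable pa')
    (hpa_ver : (fun ω => pa (X ω))
      =ᵐ[P] P[Set.indicator {ω | A ω = a} (fun _ => (1:ℝ)) | MeasurableSpace.comap X inferInstance])
    (hpa'_ver : (fun ω => pa' (X ω))
      =ᵐ[P] P[Set.indicator {ω | A ω = a'} (fun _ => (1:ℝ)) | MeasurableSpace.comap X inferInstance])
    (hpos : ∀ᵐ ω ∂P, 0 < pa' (X ω)) :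
    (Measure.map X (P[|{ω | A ω = a}])).rnDeriv (Measure.map X (P[|{ω | A ω = a'}]))
      =ᵐ[Measure.map X (P[|{ω | A ω = a'}])]
      fun x => ENNReal.ofReal
        (pa x / pa' x * ((P {ω | A ω = a'}).toReal / (P {ω | A ω = a}).toReal)) :=
  conditional_bayes_density_ratio_general (F := F) P X hX A hA a a' ha' pa pa' hpa hpa' hpa_ver
    hpa'_ver hpos
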